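/- (Theorem 2 instantiated on the rectangle: minimal Fisher information.) Let Δ = (0,2) × (−1,2) ⊂ ℝ² and let ρ = u² be any probability density on Δ with u : Δ̄ → ℝ continuously differentiable on Δ, continuous on the closure, vanishing on the boundary of Δ, and ∫_Δ u² = 1 with ∫_Δ |∇u|² < ∞. Then the Fisher information satisfies F[ρ] = 4∫_Δ |∇u(x,y)|² dx dy ≥ 13π²/9, with equality for the ground-state density ρ_{1,1}(x,y) = (2/3) sin²(πx/2) sin²(π(y+1)/3) of the infinite potential well on Δ. -/

import Mathlib

/-!
The lower bound is Wirtinger's inequality `(π / (b - a))² ∫ₐᵇ f² ≤ ∫ₐᵇ f'²` for `f` vanishing at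
`a` and `b`, applied on every horizontal and every vertical segment of the rectangle and integrated
by Fubini: `(π²/4 + π²/9) ∫ u² ≤ ∫ |∇u|²`.

Wirtinger's inequality comes from Picone's identity: with `c = π / (b - a)` and
`w = c f² cot (c (x - a))`,
  `f'² - c² f² = (f' - c f cot (c (x - a)))² + w'`,
so `w t - w s ≤ ∫ₛᵗ (f'² - c² f²)` for `a < s ≤ t < b`. The boundary term `w` is squeezed between
`-f²/(b - x)` and `f²/(x - a)` (from `θ cos θ ≤ sin θ` on `[0, π]`). Both bounds tend to `0` as
`x → a⁺`, the second because `f(x)² ≤ (x - a) ∫ₐˣ f'²` by Cauchy–Schwarz, and likewise as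
`x → b⁻`. Equality for `u_{1,1}` is a direct computation.
-/

open MeasureTheory Real

/-- The normalized ground state of the infinite potential well on the rectangle
`Δ = (0,2) × (-1,2)`: `u_{1,1}(x,y) = √(2/3) sin(πx/2) sin(π(y+1)/3)`. -/
noncomputable def uBox11 (p : ℝ × ℝ) : ℝ :=
  Real.sqrt (2/3) * Real.sin (π * p.1 / 2) * Real.sin (π * (p.2 + 1) / 3)

open Set Filter Topology

lemma sq_intervalIntegral_le {p q : ℝ} (hpq : p ≤ q) {g : ℝ → ℝ}
    (hg : IntervalIntegrable g volume p q)
    (hg2 : IntervalIntegrable (fun x => g x ^ 2) volume p q) :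
    (∫ x in p..q, g x) ^ 2 ≤ (q - p) * ∫ x in p..q, g x ^ 2 := by
  rcases hpq.eq_or_lt with rfl | hpq
  · simp
  have hL : 0 < q - p := sub_pos.2 hpq
  have hjensen := (even_two.convexOn_pow (𝕜 := ℝ)).map_set_average_le
    (continuous_pow 2).continuousOn isClosed_univ (μ := volume) (t := Ioc p q)
    (by simp [hpq]) (by simp) (by simp) hg.1 hg2.1
  simp only [setAverage_eq, measureReal_def, Real.volume_Ioc, ENNReal.toReal_ofReal hL.le,
    smul_eq_mul, ← div_eq_inv_mul] at hjensen
  rw [div_pow, div_le_div_iff₀ (by positivity) hL] at hjensen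
  rw [intervalIntegral.integral_of_le hpq.le, intervalIntegral.integral_of_le hpq.le]
  nlinarith

lemma sq_sub_le_mul_integral_deriv_sq {f f' : ℝ → ℝ} {p q : ℝ} (hpq : p ≤ q)
    (hf : ContinuousOn f (Icc p q)) (hd : ∀ x ∈ Ioo p q, HasDerivAt f (f' x) x)
    (hf' : IntervalIntegrable f' volume p q)
    (hf'2 : IntervalIntegrable (fun x => f' x ^ 2) volume p q) :
    (f q - f p) ^ 2 ≤ (q - p) * ∫ x in p..q, f' x ^ 2 := by
  rw [← intervalIntegral.integral_eq_sub_of_hasDerivAt_of_le hpq hf hd hf']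
  exact sq_intervalIntegral_le hpq hf' hf'2

lemma mul_cos_le_sin {θ : ℝ} (h0 : 0 ≤ θ) (hπ : θ ≤ π) : θ * cos θ ≤ sin θ := by
  rcases lt_or_ge θ (π / 2) with hθ | hθ
  · have hcos : 0 < cos θ := cos_pos_of_mem_Ioo ⟨by linarith [pi_pos], hθ⟩
    rw [← le_div_iff₀ hcos, ← tan_eq_sin_div_cos]
    exact le_tan h0 hθ
  · have hcos : cos θ ≤ 0 := cos_nonpos_of_pi_div_two_le_of_le hθ (by linarith [pi_pos])
    nlinarith [sin_nonneg_of_nonneg_of_le_pi h0 hπ]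

section Wirtinger

variable {f f' : ℝ → ℝ} {a b : ℝ}

lemma tendsto_sq_div_sub_nhdsGT (hab : a < b) (hf : ContinuousOn f (Icc a b))
    (hd : ∀ x ∈ Ioo a b, HasDerivAt f (f' x) x) (hf' : IntervalIntegrable f' volume a b)
    (hf'2 : IntervalIntegrable (fun x => f' x ^ 2) volume a b) (ha : f a = 0) :
    Tendsto (fun x => f x ^ 2 / (x - a)) (𝓝[>] a) (𝓝 0) := by
  have hprim : Tendsto (fun x => ∫ t in a..x, f' t ^ 2) (𝓝[>] a) (𝓝 0) := by
    simpa using ((intervalIntegral.continuousOn_primitive_interval' hf'2 left_mem_uIcc).mono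
      Icc_subset_uIcc a (left_mem_Icc.2 hab.le)).tendsto.mono_left
      (nhdsWithin_le_of_mem (Icc_mem_nhdsGT hab))
  refine tendsto_of_tendsto_of_tendsto_of_le_of_le' tendsto_const_nhds hprim ?_ ?_
  · filter_upwards [self_mem_nhdsWithin] with x (hx : a < x)
    exact div_nonneg (sq_nonneg _) (sub_pos.2 hx).le
  · filter_upwards [Ioo_mem_nhdsGT hab] with x hx
    have hsub : uIcc a x ⊆ uIcc a b :=
      uIcc_subset_uIcc left_mem_uIcc (Icc_subset_uIcc (Ioo_subset_Icc_self hx))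
    have := sq_sub_le_mul_integral_deriv_sq hx.1.le (hf.mono (Icc_subset_Icc_right hx.2.le))
      (fun y hy => hd y ⟨hy.1, hy.2.trans hx.2⟩) (hf'.mono_set hsub) (hf'2.mono_set hsub)
    rw [ha, sub_zero] at this
    rw [div_le_iff₀ (sub_pos.2 hx.1)]
    linarith

lemma tendsto_sq_div_sub_nhdsLT (hab : a < b) (hf : ContinuousOn f (Icc a b))
    (hd : ∀ x ∈ Ioo a b, HasDerivAt f (f' x) x) (hf' : IntervalIntegrable f' volume a b)
    (hf'2 : IntervalIntegrable (fun x => f' x ^ 2) volume a b) (hb : f b = 0) :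
    Tendsto (fun x => f x ^ 2 / (b - x)) (𝓝[<] b) (𝓝 0) := by
  have hprim : Tendsto (fun x => ∫ t in x..b, f' t ^ 2) (𝓝[<] b) (𝓝 0) := by
    simpa using ((intervalIntegral.continuousOn_primitive_interval_left
      ((intervalIntegrable_iff').1 hf'2)).mono Icc_subset_uIcc b
        (right_mem_Icc.2 hab.le)).tendsto.mono_left (nhdsWithin_le_of_mem (Icc_mem_nhdsLT hab))
  refine tendsto_of_tendsto_of_tendsto_of_le_of_le' tendsto_const_nhds hprim ?_ ?_
  · filter_upwards [self_mem_nhdsWithin] with x (hx : x < b)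
    exact div_nonneg (sq_nonneg _) (sub_pos.2 hx).le
  · filter_upwards [Ioo_mem_nhdsLT hab] with x hx
    have hsub : uIcc x b ⊆ uIcc a b :=
      uIcc_subset_uIcc (Icc_subset_uIcc (Ioo_subset_Icc_self hx)) right_mem_uIcc
    have := sq_sub_le_mul_integral_deriv_sq hx.2.le (hf.mono (Icc_subset_Icc_left hx.1.le))
      (fun y hy => hd y ⟨hx.1.trans hy.1, hy.2⟩) (hf'.mono_set hsub) (hf'2.mono_set hsub)
    rw [hb, zero_sub, neg_sq] at this
    rw [div_le_iff₀ (sub_pos.2 hx.2)]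
    linarith

noncomputable def piconeTerm (c a : ℝ) (f : ℝ → ℝ) (x : ℝ) : ℝ :=
  c * f x ^ 2 * cos (c * (x - a)) / sin (c * (x - a))

lemma hasDerivAt_piconeTerm {c x : ℝ} (hsin : sin (c * (x - a)) ≠ 0)
    (hd : HasDerivAt f (f' x) x) :
    HasDerivAt (piconeTerm c a f) (f' x ^ 2 - c ^ 2 * f x ^ 2
      - (f' x - c * f x * cos (c * (x - a)) / sin (c * (x - a))) ^ 2) x := by
  have hθ : HasDerivAt (fun y => c * (y - a)) c x := by
    simpa using ((hasDerivAt_id x).sub_const a).const_mul c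
  refine ((((hd.fun_pow 2).const_mul c).fun_mul ((hasDerivAt_cos _).comp x hθ)).fun_div
    ((hasDerivAt_sin _).comp x hθ) hsin).congr_deriv ?_
  simp only [Function.comp_apply]
  field_simp
  ring

lemma piconeTerm_sub_le_integral {c s t : ℝ} (hst : s ≤ t)
    (hsin : ∀ x ∈ Icc s t, sin (c * (x - a)) ≠ 0) (hd : ∀ x ∈ Icc s t, HasDerivAt f (f' x) x)
    (hf' : ContinuousOn f' (Icc s t)) :
    piconeTerm c a f t - piconeTerm c a f s ≤ ∫ x in s..t, (f' x ^ 2 - c ^ 2 * f x ^ 2) := by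
  have hf : ContinuousOn f (Icc s t) := fun x hx => (hd x hx).continuousAt.continuousWithinAt
  have hg : ContinuousOn (fun x => f' x ^ 2 - c ^ 2 * f x ^ 2) (Icc s t) := by fun_prop
  have hderiv : ContinuousOn (fun x => f' x ^ 2 - c ^ 2 * f x ^ 2
      - (f' x - c * f x * cos (c * (x - a)) / sin (c * (x - a))) ^ 2) (Icc s t) := by
    fun_prop (disch := assumption)
  rw [← intervalIntegral.integral_eq_sub_of_hasDerivAt
    (fun x hx => hasDerivAt_piconeTerm (hsin x (uIcc_of_le hst ▸ hx)) (hd x (uIcc_of_le hst ▸ hx)))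
    (hderiv.intervalIntegrable_of_Icc hst)]
  exact intervalIntegral.integral_mono_on hst (hderiv.intervalIntegrable_of_Icc hst)
    (hg.intervalIntegrable_of_Icc hst) fun x _ => sub_le_self _ (sq_nonneg _)

lemma pi_div_mul_sub_mem_Ioo {x : ℝ} (hx : x ∈ Ioo a b) :
    π / (b - a) * (x - a) ∈ Ioo 0 π := by
  have hL : 0 < b - a := by linarith [hx.1, hx.2]
  constructor
  · exact mul_pos (div_pos pi_pos hL) (by linarith [hx.1])
  · rw [div_mul_eq_mul_div, div_lt_iff₀ hL]
    nlinarith [pi_pos, hx.2]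

lemma piconeTerm_le_sq_div {x : ℝ} (hx : x ∈ Ioo a b) :
    piconeTerm (π / (b - a)) a f x ≤ f x ^ 2 / (x - a) := by
  obtain ⟨hθ0, hθπ⟩ := pi_div_mul_sub_mem_Ioo hx
  unfold piconeTerm
  rw [div_le_div_iff₀ (sin_pos_of_pos_of_lt_pi hθ0 hθπ) (by linarith [hx.1])]
  nlinarith [mul_le_mul_of_nonneg_left (mul_cos_le_sin hθ0.le hθπ.le) (sq_nonneg (f x))]

lemma neg_sq_div_le_piconeTerm {x : ℝ} (hx : x ∈ Ioo a b) :
    -(f x ^ 2 / (b - x)) ≤ piconeTerm (π / (b - a)) a f x := by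
  have hx' : a + b - x ∈ Ioo a b := ⟨by linarith [hx.2], by linarith [hx.1]⟩
  obtain ⟨hθ0, hθπ⟩ := pi_div_mul_sub_mem_Ioo hx'
  have hθ : π / (b - a) * (x - a) = π - π / (b - a) * (a + b - x - a) := by
    have : b - a ≠ 0 := by linarith [hx.1, hx.2]
    field_simp; ring
  unfold piconeTerm
  rw [hθ, cos_pi_sub, sin_pi_sub, mul_neg, neg_div, neg_le_neg_iff,
    div_le_div_iff₀ (sin_pos_of_pos_of_lt_pi hθ0 hθπ) (by linarith [hx.2])]
  nlinarith [mul_le_mul_of_nonneg_left (mul_cos_le_sin hθ0.le hθπ.le) (sq_nonneg (f x))]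

lemma tendsto_piconeTerm_nhdsGT (hab : a < b) (hf : ContinuousOn f (Icc a b))
    (hd : ∀ x ∈ Ioo a b, HasDerivAt f (f' x) x) (hf' : IntervalIntegrable f' volume a b)
    (hf'2 : IntervalIntegrable (fun x => f' x ^ 2) volume a b) (ha : f a = 0) :
    Tendsto (piconeTerm (π / (b - a)) a f) (𝓝[>] a) (𝓝 0) := by
  have hlower : Tendsto (fun x => -(f x ^ 2 / (b - x))) (𝓝[>] a) (𝓝 0) := by
    have hfa := (hf a (left_mem_Icc.2 hab.le)).tendsto.mono_left
      (nhdsWithin_le_of_mem (Icc_mem_nhdsGT hab))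
    simpa [ha] using ((hfa.pow 2).div (tendsto_const_nhds.sub
      (tendsto_id.mono_left nhdsWithin_le_nhds)) (sub_ne_zero.2 hab.ne')).neg
  refine tendsto_of_tendsto_of_tendsto_of_le_of_le' hlower
    (tendsto_sq_div_sub_nhdsGT hab hf hd hf' hf'2 ha) ?_ ?_
  · filter_upwards [Ioo_mem_nhdsGT hab] with x hx using neg_sq_div_le_piconeTerm hx
  · filter_upwards [Ioo_mem_nhdsGT hab] with x hx using piconeTerm_le_sq_div hx

lemma tendsto_piconeTerm_nhdsLT (hab : a < b) (hf : ContinuousOn f (Icc a b))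
    (hd : ∀ x ∈ Ioo a b, HasDerivAt f (f' x) x) (hf' : IntervalIntegrable f' volume a b)
    (hf'2 : IntervalIntegrable (fun x => f' x ^ 2) volume a b) (hb : f b = 0) :
    Tendsto (piconeTerm (π / (b - a)) a f) (𝓝[<] b) (𝓝 0) := by
  have hupper : Tendsto (fun x => f x ^ 2 / (x - a)) (𝓝[<] b) (𝓝 0) := by
    have hfb := (hf b (right_mem_Icc.2 hab.le)).tendsto.mono_left
      (nhdsWithin_le_of_mem (Icc_mem_nhdsLT hab))
    simpa [hb, Pi.div_def] using (hfb.pow 2).div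
      ((tendsto_id.mono_left nhdsWithin_le_nhds).sub tendsto_const_nhds) (sub_ne_zero.2 hab.ne')
  refine tendsto_of_tendsto_of_tendsto_of_le_of_le'
    (by simpa using (tendsto_sq_div_sub_nhdsLT hab hf hd hf' hf'2 hb).neg) hupper ?_ ?_
  · filter_upwards [Ioo_mem_nhdsLT hab] with x hx using neg_sq_div_le_piconeTerm hx
  · filter_upwards [Ioo_mem_nhdsLT hab] with x hx using piconeTerm_le_sq_div hx

lemma integral_nonneg_of_sub_le_integral {w g : ℝ → ℝ} (hab : a < b)
    (hg : IntervalIntegrable g volume a b) (hwa : Tendsto w (𝓝[>] a) (𝓝 0))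
    (hwb : Tendsto w (𝓝[<] b) (𝓝 0))
    (hw : ∀ s t, a < s → s ≤ t → t < b → w t - w s ≤ ∫ x in s..t, g x) :
    0 ≤ ∫ x in a..b, g x := by
  have hright : ∀ s ∈ Ioo a b, -w s ≤ ∫ x in s..b, g x := by
    intro s hs
    have hgs : IntervalIntegrable g volume s b :=
      hg.mono_set (uIcc_subset_uIcc (Icc_subset_uIcc (Ioo_subset_Icc_self hs)) right_mem_uIcc)
    refine le_of_tendsto_of_tendsto (b := 𝓝[<] b) (by simpa using hwb.sub_const (w s))
      (((intervalIntegral.continuousOn_primitive_interval' hgs left_mem_uIcc).mono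
        Icc_subset_uIcc b (right_mem_Icc.2 hs.2.le)).tendsto.mono_left
        (nhdsWithin_le_of_mem (Icc_mem_nhdsLT hs.2))) ?_
    filter_upwards [Ioo_mem_nhdsLT hs.2] with t ht using hw s t hs.1 ht.1.le ht.2
  refine le_of_tendsto_of_tendsto (b := 𝓝[>] a) (by simpa using hwa.neg)
    (((intervalIntegral.continuousOn_primitive_interval_left ((intervalIntegrable_iff').1 hg)).mono
      Icc_subset_uIcc a (left_mem_Icc.2 hab.le)).tendsto.mono_left
      (nhdsWithin_le_of_mem (Icc_mem_nhdsGT hab))) ?_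
  filter_upwards [Ioo_mem_nhdsGT hab] with s hs using hright s hs

theorem mul_integral_sq_le_integral_deriv_sq (hab : a < b) (hf : ContinuousOn f (Icc a b))
    (hd : ∀ x ∈ Ioo a b, HasDerivAt f (f' x) x) (hf' : ContinuousOn f' (Ioo a b))
    (hf'2 : IntegrableOn (fun x => f' x ^ 2) (Ioo a b)) (ha : f a = 0) (hb : f b = 0) :
    (π / (b - a)) ^ 2 * ∫ x in Ioo a b, f x ^ 2 ≤ ∫ x in Ioo a b, f' x ^ 2 := by
  have hf'I : IntervalIntegrable f' volume a b :=
    (intervalIntegrable_iff_integrableOn_Ioo_of_le hab.le).2 <|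
      ((memLp_two_iff_integrable_sq (hf'.aestronglyMeasurable measurableSet_Ioo)).2
        hf'2).integrable one_le_two
  have hf'2I : IntervalIntegrable (fun x => f' x ^ 2) volume a b :=
    (intervalIntegrable_iff_integrableOn_Ioo_of_le hab.le).2 hf'2
  have hf2I : IntervalIntegrable (fun x => f x ^ 2) volume a b :=
    (hf.pow 2).intervalIntegrable_of_Icc hab.le
  have hnonneg := integral_nonneg_of_sub_le_integral hab (hf'2I.sub (hf2I.const_mul _))
    (tendsto_piconeTerm_nhdsGT hab hf hd hf'I hf'2I ha)
    (tendsto_piconeTerm_nhdsLT hab hf hd hf'I hf'2I hb) fun s t has hst htb => by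
      have hsub : Icc s t ⊆ Ioo a b := Icc_subset_Ioo has htb
      refine piconeTerm_sub_le_integral hst (fun x hx => ?_) (fun x hx => hd x (hsub hx))
        (hf'.mono hsub)
      obtain ⟨hθ0, hθπ⟩ := pi_div_mul_sub_mem_Ioo (hsub hx)
      exact (sin_pos_of_pos_of_lt_pi hθ0 hθπ).ne'
  rw [intervalIntegral.integral_sub hf'2I (hf2I.const_mul _), intervalIntegral.integral_const_mul,
    intervalIntegral.integral_of_le hab.le, intervalIntegral.integral_of_le hab.le,
    integral_Ioc_eq_integral_Ioo, integral_Ioc_eq_integral_Ioo] at hnonneg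
  exact sub_nonneg.1 hnonneg

end Wirtinger

lemma ContinuousOn.integrableOn_Ioo_prod_Ioo {E : Type*} [NormedAddCommGroup E]
    {g : ℝ × ℝ → E} {a₁ b₁ a₂ b₂ : ℝ} (hg : ContinuousOn g (Icc a₁ b₁ ×ˢ Icc a₂ b₂)) :
    IntegrableOn g (Ioo a₁ b₁ ×ˢ Ioo a₂ b₂) :=
  (hg.integrableOn_compact (isCompact_Icc.prod isCompact_Icc)).mono_set
    (prod_mono Ioo_subset_Icc_self Ioo_subset_Icc_self)

section Rectangle

variable {u : ℝ × ℝ → ℝ} {a₁ b₁ a₂ b₂ : ℝ}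

theorem mul_integral_sq_le_integral_deriv_snd_sq (h₂ : a₂ < b₂)
    (hu : ContinuousOn u (Icc a₁ b₁ ×ˢ Icc a₂ b₂))
    (hd : ∀ p ∈ Ioo a₁ b₁ ×ˢ Ioo a₂ b₂, DifferentiableAt ℝ (fun y => u (p.1, y)) p.2)
    (hd' : ContinuousOn (fun p : ℝ × ℝ => deriv (fun y => u (p.1, y)) p.2)
      (Ioo a₁ b₁ ×ˢ Ioo a₂ b₂))
    (hi : IntegrableOn (fun p : ℝ × ℝ => deriv (fun y => u (p.1, y)) p.2 ^ 2)
      (Ioo a₁ b₁ ×ˢ Ioo a₂ b₂))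
    (hzero : ∀ x ∈ Ioo a₁ b₁, u (x, a₂) = 0 ∧ u (x, b₂) = 0) :
    (π / (b₂ - a₂)) ^ 2 * ∫ p in Ioo a₁ b₁ ×ˢ Ioo a₂ b₂, u p ^ 2
      ≤ ∫ p in Ioo a₁ b₁ ×ˢ Ioo a₂ b₂, deriv (fun y => u (p.1, y)) p.2 ^ 2 := by
  have hR : volume.restrict (Ioo a₁ b₁ ×ˢ Ioo a₂ b₂)
      = (volume.restrict (Ioo a₁ b₁)).prod (volume.restrict (Ioo a₂ b₂)) := by
    rw [Measure.volume_eq_prod, Measure.prod_restrict]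
  have hu2 : IntegrableOn (fun p => u p ^ 2) (Ioo a₁ b₁ ×ˢ Ioo a₂ b₂) :=
    (hu.pow 2).integrableOn_Ioo_prod_Ioo
  rw [IntegrableOn, hR] at hu2 hi
  rw [hR, integral_prod _ hu2, integral_prod _ hi, ← integral_const_mul]
  refine integral_mono_ae (hu2.integral_prod_left.const_mul _) hi.integral_prod_left ?_
  filter_upwards [hi.prod_right_ae, ae_restrict_mem measurableSet_Ioo] with x hxi hx
  have hslice : Continuous fun y : ℝ => (x, y) := continuous_const.prodMk continuous_id
  exact mul_integral_sq_le_integral_deriv_sq h₂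
    (hu.comp hslice.continuousOn fun y hy => ⟨Ioo_subset_Icc_self hx, hy⟩)
    (fun y hy => (hd (x, y) ⟨hx, hy⟩).hasDerivAt)
    (hd'.comp hslice.continuousOn fun y hy => ⟨hx, hy⟩) hxi (hzero x hx).1 (hzero x hx).2

theorem mul_integral_sq_le_integral_deriv_fst_sq (h₁ : a₁ < b₁)
    (hu : ContinuousOn u (Icc a₁ b₁ ×ˢ Icc a₂ b₂))
    (hd : ∀ p ∈ Ioo a₁ b₁ ×ˢ Ioo a₂ b₂, DifferentiableAt ℝ (fun x => u (x, p.2)) p.1)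
    (hd' : ContinuousOn (fun p : ℝ × ℝ => deriv (fun x => u (x, p.2)) p.1)
      (Ioo a₁ b₁ ×ˢ Ioo a₂ b₂))
    (hi : IntegrableOn (fun p : ℝ × ℝ => deriv (fun x => u (x, p.2)) p.1 ^ 2)
      (Ioo a₁ b₁ ×ˢ Ioo a₂ b₂))
    (hzero : ∀ y ∈ Ioo a₂ b₂, u (a₁, y) = 0 ∧ u (b₁, y) = 0) :
    (π / (b₁ - a₁)) ^ 2 * ∫ p in Ioo a₁ b₁ ×ˢ Ioo a₂ b₂, u p ^ 2
      ≤ ∫ p in Ioo a₁ b₁ ×ˢ Ioo a₂ b₂, deriv (fun x => u (x, p.2)) p.1 ^ 2 := by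
  have hswap (F : ℝ × ℝ → ℝ) :
      ∫ p in Ioo a₂ b₂ ×ˢ Ioo a₁ b₁, F p.swap = ∫ p in Ioo a₁ b₁ ×ˢ Ioo a₂ b₂, F p := by
    rw [Measure.volume_eq_prod]
    exact setIntegral_prod_swap _ _ F
  have hmaps : MapsTo Prod.swap (Ioo a₂ b₂ ×ˢ Ioo a₁ b₁) (Ioo a₁ b₁ ×ˢ Ioo a₂ b₂) :=
    fun p hp => ⟨hp.2, hp.1⟩
  have := mul_integral_sq_le_integral_deriv_snd_sq (u := u ∘ Prod.swap) h₁
    (hu.comp continuous_swap.continuousOn fun p hp => ⟨hp.2, hp.1⟩)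
    (fun p hp => hd p.swap (hmaps hp)) (hd'.comp continuous_swap.continuousOn hmaps)
    (by rw [Measure.volume_eq_prod] at hi ⊢; exact hi.swap) hzero
  rw [← hswap, ← hswap]
  exact this

end Rectangle

section PartialDerivatives

variable {E F : Type*} [NormedAddCommGroup E] [NormedSpace ℝ E] [NormedAddCommGroup F]
  [NormedSpace ℝ F]

lemma DifferentiableAt.hasDerivAt_fst_slice {u : ℝ × E → F} {p : ℝ × E}
    (hu : DifferentiableAt ℝ u p) :
    HasDerivAt (fun x => u (x, p.2)) (fderiv ℝ u p (1, 0)) p.1 :=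
  hu.hasFDerivAt.comp_hasDerivAt p.1 ((hasDerivAt_id _).prodMk (hasDerivAt_const _ _))

lemma DifferentiableAt.hasDerivAt_snd_slice {u : E × ℝ → F} {p : E × ℝ}
    (hu : DifferentiableAt ℝ u p) :
    HasDerivAt (fun y => u (p.1, y)) (fderiv ℝ u p (0, 1)) p.2 :=
  hu.hasFDerivAt.comp_hasDerivAt p.2 ((hasDerivAt_const _ _).prodMk (hasDerivAt_id _))

lemma ContDiffOn.continuousOn_deriv_fst_slice {u : ℝ × E → F} {U : Set (ℝ × E)}
    (hu : ContDiffOn ℝ 1 u U) (hU : IsOpen U) :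
    ContinuousOn (fun p : ℝ × E => deriv (fun x => u (x, p.2)) p.1) U :=
  ((hu.continuousOn_fderiv_of_isOpen hU le_rfl).clm_apply continuousOn_const).congr fun _ hp =>
    ((hu.differentiableOn one_ne_zero).differentiableAt (hU.mem_nhds hp)).hasDerivAt_fst_slice.deriv

lemma ContDiffOn.continuousOn_deriv_snd_slice {u : E × ℝ → F} {U : Set (E × ℝ)}
    (hu : ContDiffOn ℝ 1 u U) (hU : IsOpen U) :
    ContinuousOn (fun p : E × ℝ => deriv (fun y => u (p.1, y)) p.2) U :=
  ((hu.continuousOn_fderiv_of_isOpen hU le_rfl).clm_apply continuousOn_const).congr fun _ hp =>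
    ((hu.differentiableOn one_ne_zero).differentiableAt (hU.mem_nhds hp)).hasDerivAt_snd_slice.deriv

end PartialDerivatives

lemma frontier_Ioo_prod_Ioo {a₁ b₁ a₂ b₂ : ℝ} (h₁ : a₁ < b₁) (h₂ : a₂ < b₂) :
    frontier (Ioo a₁ b₁ ×ˢ Ioo a₂ b₂) = Icc a₁ b₁ ×ˢ {a₂, b₂} ∪ {a₁, b₁} ×ˢ Icc a₂ b₂ := by
  rw [frontier_prod_eq, frontier_Ioo h₁, frontier_Ioo h₂, closure_Ioo h₁.ne, closure_Ioo h₂.ne]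

theorem mul_integral_sq_le_integral_grad_sq {u : ℝ × ℝ → ℝ} {a₁ b₁ a₂ b₂ : ℝ}
    (h₁ : a₁ < b₁) (h₂ : a₂ < b₂)
    (hu_smooth : ContDiffOn ℝ 1 u (Ioo a₁ b₁ ×ˢ Ioo a₂ b₂))
    (hu_cont : ContinuousOn u (closure (Ioo a₁ b₁ ×ˢ Ioo a₂ b₂)))
    (hu_boundary : ∀ p ∈ frontier (Ioo a₁ b₁ ×ˢ Ioo a₂ b₂), u p = 0)
    (hgrad : IntegrableOn (fun p : ℝ × ℝ =>
        deriv (fun x => u (x, p.2)) p.1 ^ 2 + deriv (fun y => u (p.1, y)) p.2 ^ 2)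
      (Ioo a₁ b₁ ×ˢ Ioo a₂ b₂)) :
    ((π / (b₁ - a₁)) ^ 2 + (π / (b₂ - a₂)) ^ 2) * ∫ p in Ioo a₁ b₁ ×ˢ Ioo a₂ b₂, u p ^ 2
      ≤ ∫ p in Ioo a₁ b₁ ×ˢ Ioo a₂ b₂,
          (deriv (fun x => u (x, p.2)) p.1 ^ 2 + deriv (fun y => u (p.1, y)) p.2 ^ 2) := by
  have hR : IsOpen (Ioo a₁ b₁ ×ˢ Ioo a₂ b₂) := isOpen_Ioo.prod isOpen_Ioo
  have hdiff : ∀ p ∈ Ioo a₁ b₁ ×ˢ Ioo a₂ b₂, DifferentiableAt ℝ u p := fun p hp =>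
    (hu_smooth.differentiableOn one_ne_zero).differentiableAt (hR.mem_nhds hp)
  have hc₁ := hu_smooth.continuousOn_deriv_fst_slice hR
  have hc₂ := hu_smooth.continuousOn_deriv_snd_slice hR
  have hi₁ : IntegrableOn (fun p : ℝ × ℝ => deriv (fun x => u (x, p.2)) p.1 ^ 2)
      (Ioo a₁ b₁ ×ˢ Ioo a₂ b₂) :=
    hgrad.mono' ((hc₁.pow 2).aestronglyMeasurable hR.measurableSet) <| ae_of_all _ fun _ => by
      rw [norm_of_nonneg (sq_nonneg _)]
      exact le_add_of_nonneg_right (sq_nonneg _)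
  have hi₂ : IntegrableOn (fun p : ℝ × ℝ => deriv (fun y => u (p.1, y)) p.2 ^ 2)
      (Ioo a₁ b₁ ×ˢ Ioo a₂ b₂) :=
    hgrad.mono' ((hc₂.pow 2).aestronglyMeasurable hR.measurableSet) <| ae_of_all _ fun _ => by
      rw [norm_of_nonneg (sq_nonneg _)]
      exact le_add_of_nonneg_left (sq_nonneg _)
  rw [closure_prod_eq, closure_Ioo h₁.ne, closure_Ioo h₂.ne] at hu_cont
  rw [frontier_Ioo_prod_Ioo h₁ h₂] at hu_boundary
  rw [integral_add hi₁ hi₂, add_mul]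
  refine add_le_add (mul_integral_sq_le_integral_deriv_fst_sq h₁ hu_cont
    (fun p hp => (hdiff p hp).hasDerivAt_fst_slice.differentiableAt) hc₁ hi₁ fun y hy => ?_)
    (mul_integral_sq_le_integral_deriv_snd_sq h₂ hu_cont
    (fun p hp => (hdiff p hp).hasDerivAt_snd_slice.differentiableAt) hc₂ hi₂ fun x hx => ?_)
  · exact ⟨hu_boundary _ (.inr ⟨by simp, Ioo_subset_Icc_self hy⟩),
      hu_boundary _ (.inr ⟨by simp, Ioo_subset_Icc_self hy⟩)⟩
  · exact ⟨hu_boundary _ (.inl ⟨Ioo_subset_Icc_self hx, by simp⟩),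
      hu_boundary _ (.inl ⟨Ioo_subset_Icc_self hx, by simp⟩)⟩

lemma integral_sin_sq_pi_mul_sub_div {a b : ℝ} (hab : a < b) :
    ∫ x in Ioo a b, sin (π * (x - a) / (b - a)) ^ 2 = (b - a) / 2 := by
  have hL : b - a ≠ 0 := sub_ne_zero.2 hab.ne'
  have hscale : ∀ x, π * (x - a) / (b - a) = π / (b - a) * x - π / (b - a) * a := fun _ => by ring
  rw [← integral_Ioc_eq_integral_Ioo, ← intervalIntegral.integral_of_le hab.le]
  simp_rw [hscale]
  rw [intervalIntegral.integral_comp_mul_sub (fun x => sin x ^ 2) (div_ne_zero pi_ne_zero hL),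
    sub_self, ← mul_sub, div_mul_cancel₀ _ hL, integral_sin_sq]
  simp only [inv_div, sin_zero, cos_zero, sin_pi, cos_pi, mul_one, mul_neg, neg_zero, sub_self,
    zero_add, sub_zero, smul_eq_mul]
  field_simp

lemma integral_cos_sq_pi_mul_sub_div {a b : ℝ} (hab : a < b) :
    ∫ x in Ioo a b, cos (π * (x - a) / (b - a)) ^ 2 = (b - a) / 2 := by
  have hL : b - a ≠ 0 := sub_ne_zero.2 hab.ne'
  have hscale : ∀ x, π * (x - a) / (b - a) = π / (b - a) * x - π / (b - a) * a := fun _ => by ring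
  rw [← integral_Ioc_eq_integral_Ioo, ← intervalIntegral.integral_of_le hab.le]
  simp_rw [hscale]
  rw [intervalIntegral.integral_comp_mul_sub (fun x => cos x ^ 2) (div_ne_zero pi_ne_zero hL),
    sub_self, ← mul_sub, div_mul_cancel₀ _ hL, integral_cos_sq]
  simp only [inv_div, cos_pi, sin_pi, cos_zero, sin_zero, mul_zero, sub_self, zero_add, sub_zero,
    smul_eq_mul]
  field_simp

lemma hasDerivAt_uBox11_fst (x y : ℝ) :
    HasDerivAt (fun s => uBox11 (s, y))
      (√(2 / 3) * (cos (π * x / 2) * (π / 2)) * sin (π * (y + 1) / 3)) x := by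
  have hθ : HasDerivAt (fun s : ℝ => π * s / 2) (π / 2) x := by
    simpa using ((hasDerivAt_id x).const_mul π).div_const 2
  exact (((hasDerivAt_sin _).comp x hθ).const_mul √(2 / 3)).mul_const (sin (π * (y + 1) / 3))

lemma hasDerivAt_uBox11_snd (x y : ℝ) :
    HasDerivAt (fun s => uBox11 (x, s))
      (√(2 / 3) * sin (π * x / 2) * (cos (π * (y + 1) / 3) * (π / 3))) y := by
  have hθ : HasDerivAt (fun s : ℝ => π * (s + 1) / 3) (π / 3) y := by
    simpa using (((hasDerivAt_id y).add_const 1).const_mul π).div_const 3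
  exact ((hasDerivAt_sin _).comp y hθ).const_mul (√(2 / 3) * sin (π * x / 2))

lemma integral_grad_sq_uBox11 :
    ∫ p in Ioo (0 : ℝ) 2 ×ˢ Ioo (-1 : ℝ) 2,
      (deriv (fun s => uBox11 (s, p.2)) p.1 ^ 2 + deriv (fun s => uBox11 (p.1, s)) p.2 ^ 2)
      = 13 * π ^ 2 / 36 := by
  have hgrad (p : ℝ × ℝ) :
      deriv (fun s => uBox11 (s, p.2)) p.1 ^ 2 + deriv (fun s => uBox11 (p.1, s)) p.2 ^ 2
        = π ^ 2 / 6 * cos (π * p.1 / 2) ^ 2 * sin (π * (p.2 + 1) / 3) ^ 2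
          + 2 * π ^ 2 / 27 * sin (π * p.1 / 2) ^ 2 * cos (π * (p.2 + 1) / 3) ^ 2 := by
    rw [(hasDerivAt_uBox11_fst p.1 p.2).deriv, (hasDerivAt_uBox11_snd p.1 p.2).deriv]
    linear_combination (π ^ 2 / 4 * cos (π * p.1 / 2) ^ 2 * sin (π * (p.2 + 1) / 3) ^ 2
      + π ^ 2 / 9 * sin (π * p.1 / 2) ^ 2 * cos (π * (p.2 + 1) / 3) ^ 2)
      * sq_sqrt (show (0 : ℝ) ≤ 2 / 3 by norm_num)
  have hsin₁ := integral_sin_sq_pi_mul_sub_div (a := (0 : ℝ)) (b := 2) (by norm_num)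
  have hcos₁ := integral_cos_sq_pi_mul_sub_div (a := (0 : ℝ)) (b := 2) (by norm_num)
  have hsin₂ := integral_sin_sq_pi_mul_sub_div (a := (-1 : ℝ)) (b := 2) (by norm_num)
  have hcos₂ := integral_cos_sq_pi_mul_sub_div (a := (-1 : ℝ)) (b := 2) (by norm_num)
  norm_num at hsin₁ hcos₁ hsin₂ hcos₂
  simp_rw [hgrad]
  rw [integral_add (ContinuousOn.integrableOn_Ioo_prod_Ioo (by fun_prop))
    (ContinuousOn.integrableOn_Ioo_prod_Ioo (by fun_prop)), Measure.volume_eq_prod,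
    setIntegral_prod_mul (fun x => π ^ 2 / 6 * cos (π * x / 2) ^ 2)
      (fun y => sin (π * (y + 1) / 3) ^ 2),
    setIntegral_prod_mul (fun x => 2 * π ^ 2 / 27 * sin (π * x / 2) ^ 2)
      (fun y => cos (π * (y + 1) / 3) ^ 2),
    integral_const_mul, integral_const_mul, hsin₁, hcos₁, hsin₂, hcos₂]
  ring

/-- **Theorem 2 on the rectangle: minimal Fisher information.** For any probability
density `ρ = u²` on `Δ = (0,2) × (-1,2)` with `u` continuously differentiable on `Δ`,
continuous on the closure, vanishing on the boundary, normalized, and with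
`∫_Δ |∇u|² < ∞`, the Fisher information satisfies `F[ρ] = 4∫_Δ |∇u|² ≥ 13π²/9`, with
equality for the ground-state density `ρ_{1,1} = u_{1,1}²` of the infinite potential
well on `Δ`. -/
theorem box_minimal_fisher_information
    (u : ℝ × ℝ → ℝ)
    (hu_smooth : ContDiffOn ℝ 1 u (Set.Ioo (0:ℝ) 2 ×ˢ Set.Ioo (-1:ℝ) 2))
    (hu_cont : ContinuousOn u (closure (Set.Ioo (0:ℝ) 2 ×ˢ Set.Ioo (-1:ℝ) 2)))
    (hu_boundary : ∀ p ∈ frontier (Set.Ioo (0:ℝ) 2 ×ˢ Set.Ioo (-1:ℝ) 2), u p = 0)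
    (hu_norm : ∫ p in Set.Ioo (0:ℝ) 2 ×ˢ Set.Ioo (-1:ℝ) 2, (u p)^2 = 1)
    (hfisher_fin : IntegrableOn (fun p : ℝ × ℝ =>
        (deriv (fun s => u (s, p.2)) p.1)^2 + (deriv (fun s => u (p.1, s)) p.2)^2)
      (Set.Ioo (0:ℝ) 2 ×ˢ Set.Ioo (-1:ℝ) 2)) :
    13 * π^2 / 9
      ≤ 4 * ∫ p in Set.Ioo (0:ℝ) 2 ×ˢ Set.Ioo (-1:ℝ) 2,
          ((deriv (fun s => u (s, p.2)) p.1)^2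
            + (deriv (fun s => u (p.1, s)) p.2)^2)
    ∧ (4 * ∫ p in Set.Ioo (0:ℝ) 2 ×ˢ Set.Ioo (-1:ℝ) 2,
          ((deriv (fun s => uBox11 (s, p.2)) p.1)^2
            + (deriv (fun s => uBox11 (p.1, s)) p.2)^2))
        = 13 * π^2 / 9 := by
  refine ⟨?_, by rw [integral_grad_sq_uBox11]; ring⟩
  have hbound := mul_integral_sq_le_integral_grad_sq (by norm_num) (by norm_num)
    hu_smooth hu_cont hu_boundary hfisher_fin
  rw [hu_norm, mul_one] at hbound
  calc 13 * π ^ 2 / 9 = 4 * ((π / (2 - 0)) ^ 2 + (π / (2 - -1)) ^ 2) := by ring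
    _ ≤ _ := by gcongr
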